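/- arXiv:1907.02949 — 2 statements merged into one kernel-verified Lean document; each statement's English description precedes it below -/
import Mathlib

section
/- If (A,B,C,P,Q,R) makes a Menelaus configuration in ℝ², then P, Q, and R are collinear. -/
open scoped Classical

/-- The signed ratio `(X,Y;Z)`: equal to `XZ/YZ` if `Z` is (strictly) between `X` and `Y`,
and `-(XZ/YZ)` otherwise. -/
noncomputable def sratio {V : Type*} [NormedAddCommGroup V] [NormedSpace ℝ V]
    (X Y Z : V) : ℝ :=
  if Sbtw ℝ X Z Y then dist X Z / dist Y Z else -(dist X Z / dist Y Z)

/-- The signed ratio `(X,Y;Z)` is defined: the three points are mutually distinct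
and collinear. -/
def RatioDefined {V : Type*} [NormedAddCommGroup V] [NormedSpace ℝ V] (X Y Z : V) : Prop :=
  Collinear ℝ ({X, Y, Z} : Set V) ∧ X ≠ Y ∧ X ≠ Z ∧ Y ≠ Z

/-- A sextuple `(A,B,C,P,Q,R)` makes a Menelaus configuration when `(B,C;P)`, `(C,A;Q)`
and `(A,B;R)` are all defined and their product is `-1`. -/
def MenelausConfig {V : Type*} [NormedAddCommGroup V] [NormedSpace ℝ V]
    (A B C P Q R : V) : Prop :=
  RatioDefined B C P ∧ RatioDefined C A Q ∧ RatioDefined A B R ∧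
    sratio B C P * sratio C A Q * sratio A B R = -1

/-!
Write `P = B + p (C - B)`, `Q = C + q (A - C)`, `R = A + r (B - A)`. The signed ratio
`(B,C;P)` is `p / (1 - p)`, so the Menelaus condition reads
`p q r + (1 - p)(1 - q)(1 - r) = 0`, and this is exactly the linear dependence
`p (Q - P) = (p + q - 1)(R - P)`.
-/

open AffineMap

theorem collinear_of_smul_sub_eq_smul_sub {k V : Type*} [Field k] [AddCommGroup V]
    [Module k V] {P Q R : V} {a b : k} (ha : a ≠ 0) (h : a • (Q - P) = b • (R - P)) :
    Collinear k ({P, Q, R} : Set V) := by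
  have hQ : lineMap P R (b / a) = Q := by
    rw [lineMap_apply, vsub_eq_sub, vadd_eq_add, div_eq_inv_mul, mul_smul, ← h,
      inv_smul_smul₀ ha, sub_add_cancel]
  rw [Set.insert_comm]
  exact collinear_insert_of_mem_affineSpan_pair (hQ ▸ lineMap_mem_affineSpan_pair _ _ _)

variable {V : Type*} [NormedAddCommGroup V] [NormedSpace ℝ V]

theorem RatioDefined.exists_lineMap_eq {X Y Z : V} (h : RatioDefined X Y Z) :
    ∃ t : ℝ, t ≠ 0 ∧ t ≠ 1 ∧ lineMap X Y t = Z := by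
  obtain ⟨hcol, hXY, hXZ, hYZ⟩ := h
  have hZ : Z ∈ line[ℝ, X, Y] := hcol.mem_affineSpan_of_mem_of_ne (by simp) (by simp)
    (by simp) hXY
  obtain ⟨t, rfl⟩ := mem_affineSpan_pair_iff_exists_lineMap_eq.1 hZ
  refine ⟨t, ?_, ?_, rfl⟩
  · rintro rfl
    exact hXZ (lineMap_apply_zero X Y).symm
  · rintro rfl
    exact hYZ (lineMap_apply_one X Y).symm

theorem sratio_lineMap {X Y : V} (hXY : X ≠ Y) {t : ℝ} (ht : t ≠ 1) :
    sratio X Y (lineMap X Y t) = t / (1 - t) := by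
  have hratio : dist X (lineMap X Y t) / dist Y (lineMap X Y t) = |t / (1 - t)| := by
    rw [dist_left_lineMap, dist_right_lineMap, mul_div_mul_right _ _ (dist_ne_zero.2 hXY),
      abs_div, Real.norm_eq_abs, Real.norm_eq_abs]
  rw [sratio, sbtw_lineMap_iff, hratio]
  split_ifs with hbtw
  · exact abs_of_pos (div_pos hbtw.2.1 (sub_pos.2 hbtw.2.2))
  · have hout : t ≤ 0 ∨ 1 < t := by
      by_contra! hin
      exact hbtw ⟨hXY, hin.1, lt_of_le_of_ne hin.2 ht⟩
    have hnonpos : t / (1 - t) ≤ 0 := by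
      rcases hout with h0 | h1
      · exact div_nonpos_of_nonpos_of_nonneg h0 (by linarith)
      · exact div_nonpos_of_nonneg_of_nonpos (by linarith) (by linarith)
    rw [abs_of_nonpos hnonpos, neg_neg]

theorem MenelausConfig.collinear {A B C P Q R : V} (h : MenelausConfig A B C P Q R) :
    Collinear ℝ ({P, Q, R} : Set V) := by
  obtain ⟨hP, hQ, hR, hprod⟩ := h
  obtain ⟨p, hp0, hp1, rfl⟩ := hP.exists_lineMap_eq
  obtain ⟨q, -, hq1, rfl⟩ := hQ.exists_lineMap_eq
  obtain ⟨r, -, hr1, rfl⟩ := hR.exists_lineMap_eq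
  rw [sratio_lineMap hP.2.1 hp1, sratio_lineMap hQ.2.1 hq1, sratio_lineMap hR.2.1 hr1]
    at hprod
  have hp1' : 1 - p ≠ 0 := sub_ne_zero.2 hp1.symm
  have hq1' : 1 - q ≠ 0 := sub_ne_zero.2 hq1.symm
  have hr1' : 1 - r ≠ 0 := sub_ne_zero.2 hr1.symm
  have key : p * q * r + (1 - p) * (1 - q) * (1 - r) = 0 := by
    field_simp at hprod
    linear_combination hprod
  refine collinear_of_smul_sub_eq_smul_sub hp0 (b := p + q - 1) ?_
  simp only [lineMap_apply_module]
  match_scalars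
  · ring
  · linear_combination key
  · linear_combination -key

/-- If `(A,B,C,P,Q,R)` makes a Menelaus configuration in `ℝ²`, then `P`, `Q`, `R`
are collinear. -/
theorem menelausConfig_collinear (A B C P Q R : EuclideanSpace ℝ (Fin 2))
    (h : MenelausConfig A B C P Q R) :
    Collinear ℝ ({P, Q, R} : Set (EuclideanSpace ℝ (Fin 2))) :=
  h.collinear
end

section
/- Suppose for each point X in a finite set S of lines through the origin in ℝ³, and each affine plane α not through the origin intersecting every line of S in exactly one point, we write X_α for the intersection point. If α and β are two such planes intersecting properly the lines A, B, C, P, Q, R, and the sextuple (A_α, B_α, C_α, P_α, Q_α, R_α) makes a Menelaus configuration (within the plane α, identified with ℝ²) with A_α, B_α, C_α not collinear, then (A_β, B_β, C_β, P_β, Q_β, R_β) makes a Menelaus configuration. -/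
open scoped Classical

lemma aux_sum_one {E : Type*} [NormedAddCommGroup E] [NormedSpace ℝ E]
    {s : AffineSubspace ℝ E} (h0 : (0 : E) ∉ s) {x y z : E} (hx : x ∈ s) (hy : y ∈ s)
    (hz : z ∈ s) {u v : ℝ} (h : z = u • x + v • y) : u + v = 1 := by
  by_contra hne
  have hc0 : (1 : ℝ) - u - v ≠ 0 := by intro h'; apply hne; linarith
  apply h0
  have hdir : (-u / (1 - u - v)) • (x - z) + (-v / (1 - u - v)) • (y - z) ∈ s.direction := by
    refine Submodule.add_mem _ (Submodule.smul_mem _ _ ?_) (Submodule.smul_mem _ _ ?_)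
    · simpa [vsub_eq_sub] using AffineSubspace.vsub_mem_direction hx hz
    · simpa [vsub_eq_sub] using AffineSubspace.vsub_mem_direction hy hz
  have hmem := AffineSubspace.vadd_mem_of_mem_direction hdir hz
  have heq : ((-u / (1 - u - v)) • (x - z) + (-v / (1 - u - v)) • (y - z)) +ᵥ z = 0 := by
    rw [vadd_eq_add, h]
    match_scalars <;> field_simp <;> ring
  rwa [heq] at hmem

lemma aux_smul_one {E : Type*} [NormedAddCommGroup E] [NormedSpace ℝ E]
    {s : AffineSubspace ℝ E} (h0 : (0 : E) ∉ s) {x y : E} (hx : x ∈ s) (hy : y ∈ s)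
    {c : ℝ} (h : x = c • y) : c = 1 := by
  have := aux_sum_one (u := c) (v := 0) h0 hy hy hx (by rw [h]; module)
  linarith

lemma aux_exists_smul {E : Type*} [NormedAddCommGroup E] [NormedSpace ℝ E]
    [FiniteDimensional ℝ E] {X : Submodule ℝ E} (hX : Module.finrank ℝ X = 1)
    {x w : E} (hx : x ∈ X) (hx0 : x ≠ 0) (hw : w ∈ X) : ∃ c : ℝ, w = c • x := by
  have hle : Submodule.span ℝ ({x} : Set E) ≤ X := by
    rw [Submodule.span_le]; simpa using hx
  have hsp : Submodule.span ℝ ({x} : Set E) = X := by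
    apply Submodule.eq_of_le_of_finrank_le hle
    rw [hX, finrank_span_singleton hx0]
  obtain ⟨c, hc⟩ := Submodule.mem_span_singleton.mp (hsp ▸ hw)
  exact ⟨c, hc.symm⟩

lemma sratio_lineMap_s9 {V : Type*} [NormedAddCommGroup V] [NormedSpace ℝ V]
    {B C : V} (h : B ≠ C) (t : ℝ) :
    sratio B C (AffineMap.lineMap B C t) = t / (1 - t) := by
  have hd : dist B C ≠ 0 := dist_ne_zero.mpr h
  rw [sratio, dist_comm B, dist_comm C, dist_lineMap_left, dist_lineMap_right]
  by_cases ht : Sbtw ℝ B (AffineMap.lineMap B C t) C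
  · rw [if_pos ht]
    have h2 : t ∈ Set.Ioo (0:ℝ) 1 := (sbtw_lineMap_iff.mp ht).2
    rw [Real.norm_eq_abs, Real.norm_eq_abs, abs_of_pos h2.1,
      abs_of_pos (by linarith [h2.2] : (0:ℝ) < 1 - t), mul_div_mul_right _ _ hd]
  · rw [if_neg ht]
    have ht' : t ∉ Set.Ioo (0:ℝ) 1 := fun h' => ht (sbtw_lineMap_iff.mpr ⟨h, h'⟩)
    rw [Set.mem_Ioo, not_and_or, not_lt, not_lt] at ht'
    rw [mul_div_mul_right _ _ hd, Real.norm_eq_abs, Real.norm_eq_abs]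
    rcases ht' with h1 | h1
    · rw [abs_of_nonpos h1, abs_of_nonneg (by linarith : (0:ℝ) ≤ 1 - t), neg_div, neg_neg]
    · rw [abs_of_nonneg (by linarith : (0:ℝ) ≤ t),
        abs_of_nonpos (by linarith : 1 - t ≤ (0:ℝ)), div_neg, neg_neg]

lemma aux_step {E : Type*} [NormedAddCommGroup E] [NormedSpace ℝ E]
    {s : AffineSubspace ℝ E} (h0 : (0 : E) ∉ s)
    {Xα Yα Zα Xβ Yβ Zβ : E} {x y z : ℝ}
    (hx : Xβ = x • Xα) (hy : Yβ = y • Yα) (hz : Zβ = z • Zα)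
    (hx0 : x ≠ 0) (hy0 : y ≠ 0) (hz0 : z ≠ 0)
    (hXβ : Xβ ∈ s) (hYβ : Yβ ∈ s) (hZβ : Zβ ∈ s)
    (hXY : Xβ ≠ Yβ) (hXZ : Xβ ≠ Zβ) (hYZ : Yβ ≠ Zβ)
    (hdef : RatioDefined Xα Yα Zα) :
    RatioDefined Xβ Yβ Zβ ∧ sratio Xβ Yβ Zβ = sratio Xα Yα Zα * (x / y) := by
  obtain ⟨hcol, hXYα, hXZα, hYZα⟩ := hdef
  have hmem : Zα ∈ line[ℝ, Xα, Yα] :=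
    hcol.mem_affineSpan_of_mem_of_ne (Set.mem_insert _ _)
      (Set.mem_insert_of_mem _ (Set.mem_insert _ _))
      (Set.mem_insert_of_mem _ (Set.mem_insert_of_mem _ rfl)) hXYα
  obtain ⟨t, ht⟩ : ∃ t : ℝ, AffineMap.lineMap Xα Yα t = Zα := by
    have hv : Zα -ᵥ Xα ∈ vectorSpan ℝ ({Xα, Yα} : Set E) := by
      rw [← direction_affineSpan]
      exact AffineSubspace.vsub_mem_direction hmem (left_mem_affineSpan_pair ℝ Xα Yα)
    obtain ⟨r, hr⟩ := mem_vectorSpan_pair_rev.mp hv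
    exact ⟨r, by rw [AffineMap.lineMap_apply, hr, vsub_vadd]⟩
  have ht0 : t ≠ 0 := by
    intro h'; apply hXZα; rw [← ht, h', AffineMap.lineMap_apply_zero]
  have ht1 : t ≠ 1 := by
    intro h'; apply hYZα; rw [← ht, h', AffineMap.lineMap_apply_one]
  have ht1' : (1:ℝ) - t ≠ 0 := by intro h'; apply ht1; linarith
  have hZβ' : Zβ = (z * (1 - t) / x) • Xβ + (z * t / y) • Yβ := by
    rw [hx, hy, hz, ← ht, AffineMap.lineMap_apply, vsub_eq_sub, vadd_eq_add]
    match_scalars <;> (field_simp; try ring; try tauto)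
  have hsum : z * (1 - t) / x + z * t / y = 1 := aux_sum_one h0 hXβ hYβ hZβ hZβ'
  have hu : z * (1 - t) / x = 1 - z * t / y := by linarith
  have hZlm : AffineMap.lineMap Xβ Yβ (z * t / y) = Zβ := by
    rw [hZβ', hu, AffineMap.lineMap_apply, vsub_eq_sub, vadd_eq_add]
    module
  have hcolβ : Collinear ℝ ({Xβ, Yβ, Zβ} : Set E) := by
    have h1 : Collinear ℝ ({Zβ, Xβ, Yβ} : Set E) :=
      collinear_insert_of_mem_affineSpan_pair
        (by rw [← hZlm]; exact AffineMap.lineMap_mem_affineSpan_pair _ _ _)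
    refine h1.subset ?_
    intro p hp; simp only [Set.mem_insert_iff, Set.mem_singleton_iff] at hp ⊢; tauto
  refine ⟨⟨hcolβ, hXY, hXZ, hYZ⟩, ?_⟩
  rw [← hZlm, sratio_lineMap_s9 hXY, ← ht, sratio_lineMap_s9 hXYα, ← hu]
  field_simp

lemma aux_ne {E : Type*} [NormedAddCommGroup E] [NormedSpace ℝ E] [FiniteDimensional ℝ E]
    {X Y : Submodule ℝ E} (hX : Module.finrank ℝ X = 1) (hY : Module.finrank ℝ Y = 1)
    {α β : AffineSubspace ℝ E} (hα0 : (0:E) ∉ α) (hβ0 : (0:E) ∉ β)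
    {xα yα xβ yβ : E} (hxα : xα ∈ X) (hxα' : xα ∈ α) (hyα : yα ∈ Y) (hyα' : yα ∈ α)
    (hxβ : xβ ∈ X) (hxβ' : xβ ∈ β) (hyβ : yβ ∈ Y) (hyβ' : yβ ∈ β)
    (hne : xα ≠ yα) : xβ ≠ yβ := by
  intro h
  have hxα0 : xα ≠ 0 := fun h' => hα0 (h' ▸ hxα')
  have hyα0 : yα ≠ 0 := fun h' => hα0 (h' ▸ hyα')
  obtain ⟨s, hs⟩ := aux_exists_smul hX hxα hxα0 hxβ
  obtain ⟨t, htt⟩ := aux_exists_smul hY hyα hyα0 hyβ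
  have hs0 : s ≠ 0 := by
    rintro rfl
    apply hβ0
    have : xβ = 0 := by simpa using hs
    rwa [this] at hxβ'
  have hst : s • xα = t • yα := by rw [← hs, ← htt, h]
  have hx2 : xα = (s⁻¹ * t) • yα := by
    calc xα = s⁻¹ • (s • xα) := (inv_smul_smul₀ hs0 xα).symm
      _ = s⁻¹ • (t • yα) := by rw [hst]
      _ = (s⁻¹ * t) • yα := (smul_smul _ _ _)
  have h1 := aux_smul_one hα0 hxα' hyα' hx2
  exact hne (by rw [hx2, h1, one_smul])

lemma aux_smul_ne_zero {E : Type*} [NormedAddCommGroup E] [NormedSpace ℝ E]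
    {β : AffineSubspace ℝ E} (hβ0 : (0:E) ∉ β) {w v : E} {c : ℝ}
    (h : w = c • v) (hw : w ∈ β) : c ≠ 0 := by
  rintro rfl
  apply hβ0
  have : w = 0 := by simpa using h
  rwa [this] at hw

/-- Invariance of the Menelaus configuration under change of the transversal plane:
if `A, B, C, P, Q, R` are lines through the origin in `ℝ³` and `α`, `β` are affine
planes avoiding the origin that intersect these lines properly (with intersection
points `Aα, ..., Rα` resp. `Aβ, ..., Rβ`), and `(Aα,Bα,Cα,Pα,Qα,Rα)` makes a Menelaus
configuration with `Aα`, `Bα`, `Cα` not collinear, then `(Aβ,Bβ,Cβ,Pβ,Qβ,Rβ)` makes a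
Menelaus configuration. -/
theorem menelausConfig_change_plane
    (A B C P Q R : Submodule ℝ (EuclideanSpace ℝ (Fin 3)))
    (hA : Module.finrank ℝ A = 1) (hB : Module.finrank ℝ B = 1)
    (hC : Module.finrank ℝ C = 1) (hP : Module.finrank ℝ P = 1)
    (hQ : Module.finrank ℝ Q = 1) (hR : Module.finrank ℝ R = 1)
    (α β : AffineSubspace ℝ (EuclideanSpace ℝ (Fin 3)))
    (hα : Module.finrank ℝ α.direction = 2) (hβ : Module.finrank ℝ β.direction = 2)
    (hα0 : (0 : EuclideanSpace ℝ (Fin 3)) ∉ α)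
    (hβ0 : (0 : EuclideanSpace ℝ (Fin 3)) ∉ β)
    (Aα Bα Cα Pα Qα Rα Aβ Bβ Cβ Pβ Qβ Rβ : EuclideanSpace ℝ (Fin 3))
    (hAα : Aα ∈ A) (hAα' : Aα ∈ α) (hBα : Bα ∈ B) (hBα' : Bα ∈ α)
    (hCα : Cα ∈ C) (hCα' : Cα ∈ α) (hPα : Pα ∈ P) (hPα' : Pα ∈ α)
    (hQα : Qα ∈ Q) (hQα' : Qα ∈ α) (hRα : Rα ∈ R) (hRα' : Rα ∈ α)
    (hAβ : Aβ ∈ A) (hAβ' : Aβ ∈ β) (hBβ : Bβ ∈ B) (hBβ' : Bβ ∈ β)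
    (hCβ : Cβ ∈ C) (hCβ' : Cβ ∈ β) (hPβ : Pβ ∈ P) (hPβ' : Pβ ∈ β)
    (hQβ : Qβ ∈ Q) (hQβ' : Qβ ∈ β) (hRβ : Rβ ∈ R) (hRβ' : Rβ ∈ β)
    (hconf : MenelausConfig Aα Bα Cα Pα Qα Rα)
    (hnc : ¬ Collinear ℝ ({Aα, Bα, Cα} : Set (EuclideanSpace ℝ (Fin 3)))) :
    MenelausConfig Aβ Bβ Cβ Pβ Qβ Rβ := by
  
  obtain ⟨hd1, hd2, hd3, hprod⟩ := hconf
  have hAα0 : Aα ≠ 0 := fun h => hα0 (h ▸ hAα')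
  have hBα0 : Bα ≠ 0 := fun h => hα0 (h ▸ hBα')
  have hCα0 : Cα ≠ 0 := fun h => hα0 (h ▸ hCα')
  have hPα0 : Pα ≠ 0 := fun h => hα0 (h ▸ hPα')
  have hQα0 : Qα ≠ 0 := fun h => hα0 (h ▸ hQα')
  have hRα0 : Rα ≠ 0 := fun h => hα0 (h ▸ hRα')
  obtain ⟨a, ha⟩ := aux_exists_smul hA hAα hAα0 hAβ
  obtain ⟨b, hb⟩ := aux_exists_smul hB hBα hBα0 hBβ
  obtain ⟨c, hc⟩ := aux_exists_smul hC hCα hCα0 hCβ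
  obtain ⟨p, hp⟩ := aux_exists_smul hP hPα hPα0 hPβ
  obtain ⟨q, hq⟩ := aux_exists_smul hQ hQα hQα0 hQβ
  obtain ⟨r, hr⟩ := aux_exists_smul hR hRα hRα0 hRβ
  have ha0 := aux_smul_ne_zero hβ0 ha hAβ'
  have hb0 := aux_smul_ne_zero hβ0 hb hBβ'
  have hc0 := aux_smul_ne_zero hβ0 hc hCβ'
  have hp0 := aux_smul_ne_zero hβ0 hp hPβ'
  have hq0 := aux_smul_ne_zero hβ0 hq hQβ'
  have hr0 := aux_smul_ne_zero hβ0 hr hRβ'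
  have hBC := aux_ne hB hC hα0 hβ0 hBα hBα' hCα hCα' hBβ hBβ' hCβ hCβ' hd1.2.1
  have hBP := aux_ne hB hP hα0 hβ0 hBα hBα' hPα hPα' hBβ hBβ' hPβ hPβ' hd1.2.2.1
  have hCP := aux_ne hC hP hα0 hβ0 hCα hCα' hPα hPα' hCβ hCβ' hPβ hPβ' hd1.2.2.2
  have hCA := aux_ne hC hA hα0 hβ0 hCα hCα' hAα hAα' hCβ hCβ' hAβ hAβ' hd2.2.1
  have hCQ := aux_ne hC hQ hα0 hβ0 hCα hCα' hQα hQα' hCβ hCβ' hQβ hQβ' hd2.2.2.1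
  have hAQ := aux_ne hA hQ hα0 hβ0 hAα hAα' hQα hQα' hAβ hAβ' hQβ hQβ' hd2.2.2.2
  have hAB := aux_ne hA hB hα0 hβ0 hAα hAα' hBα hBα' hAβ hAβ' hBβ hBβ' hd3.2.1
  have hAR := aux_ne hA hR hα0 hβ0 hAα hAα' hRα hRα' hAβ hAβ' hRβ hRβ' hd3.2.2.1
  have hBR := aux_ne hB hR hα0 hβ0 hBα hBα' hRα hRα' hBβ hBβ' hRβ hRβ' hd3.2.2.2
  have step1 := aux_step hβ0 hb hc hp hb0 hc0 hp0 hBβ' hCβ' hPβ' hBC hBP hCP hd1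
  have step2 := aux_step hβ0 hc ha hq hc0 ha0 hq0 hCβ' hAβ' hQβ' hCA hCQ hAQ hd2
  have step3 := aux_step hβ0 ha hb hr ha0 hb0 hr0 hAβ' hBβ' hRβ' hAB hAR hBR hd3
  refine ⟨step1.1, step2.1, step3.1, ?_⟩
  rw [step1.2, step2.2, step3.2]
  have h1 : (b / c) * (c / a) * (a / b) = 1 := by field_simp
  calc sratio Bα Cα Pα * (b / c) * (sratio Cα Aα Qα * (c / a)) * (sratio Aα Bα Rα * (a / b))
      = sratio Bα Cα Pα * sratio Cα Aα Qα * sratio Aα Bα Rα * ((b / c) * (c / a) * (a / b)) := by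
        ring
    _ = -1 := by rw [hprod, h1, mul_one]
end
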